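/- Let φ be an N-function on ℝⁿ with lower Matuszewska–Orlicz index α_φ, and let 0 < μ < α_φ < ∞. Then ρ_φ(u)/‖u‖_{L^φ}^μ → ∞ as ‖u‖_{L^φ} → ∞, where ρ_φ(u) = ∫₀ᵀ φ(u) dt. -/
import Mathlib


open MeasureTheory Set
open scoped ENNReal

/-- `φ` is a G-function on a Banach space `X`. -/
structure IsGFunction {X : Type*} [NormedAddCommGroup X] [NormedSpace ℝ X]
    (φ : X → ℝ) : Prop where
  nonneg : ∀ x, 0 ≤ φ x
  convexOn : ConvexOn ℝ Set.univ φ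
  even : ∀ x, φ (-x) = φ x
  lsc : LowerSemicontinuous φ
  zero : φ 0 = 0
  bddNearZero : ∃ ε > (0:ℝ), ∃ M : ℝ, ∀ x, ‖x‖ < ε → φ x ≤ M
  tendsto_infty : ∀ M : ℝ, ∃ R : ℝ, ∀ x, R < ‖x‖ → M ≤ φ x

/-- The modular `ρ_φ(u) = ∫₀ᵀ φ(u(t)) dt` (as an extended real). -/
noncomputable def orliczModular {X : Type*} [NormedAddCommGroup X]
    (φ : X → ℝ) (T : ℝ) (u : ℝ → X) : ℝ≥0∞ :=
  ∫⁻ t in Ioc (0:ℝ) T, ENNReal.ofReal (φ (u t))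

/-- The Luxemburg norm. -/
noncomputable def luxNorm {X : Type*} [NormedAddCommGroup X] [NormedSpace ℝ X]
    (φ : X → ℝ) (T : ℝ) (u : ℝ → X) : ℝ :=
  sInf {l : ℝ | 0 < l ∧ orliczModular φ T (fun t => l⁻¹ • u t) ≤ 1}

/-- Membership in the Orlicz space `L^φ([0,T], X)`. -/
def MemOrlicz {X : Type*} [NormedAddCommGroup X] [NormedSpace ℝ X]
    (φ : X → ℝ) (T : ℝ) (u : ℝ → X) : Prop :=
  AEStronglyMeasurable u (volume.restrict (Ioc (0:ℝ) T)) ∧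
    ∃ c : ℝ, 0 < c ∧ orliczModular φ T (fun t => c • u t) < ⊤

/-- `φ` is an N-function. -/
structure IsNFunction {n : ℕ} (φ : EuclideanSpace ℝ (Fin n) → ℝ) : Prop where
  isG : IsGFunction φ
  zero_iff : ∀ x, φ x = 0 ↔ x = 0
  small : ∀ ε : ℝ, 0 < ε → ∃ δ > (0:ℝ), ∀ x, x ≠ 0 → ‖x‖ < δ → φ x / ‖x‖ < ε
  large : ∀ M : ℝ, ∃ R : ℝ, ∀ x, R < ‖x‖ → M ≤ φ x / ‖x‖

/-- If `0 < μ < α_φ` then `ρ_φ(u)/‖u‖_{L^φ}^μ → ∞` as `‖u‖_{L^φ} → ∞`. -/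
theorem stmt_16 {n : ℕ} (φ : EuclideanSpace ℝ (Fin n) → ℝ) (hN : IsNFunction φ)
    (T : ℝ) (hT : 0 < T) (α μ : ℝ)
    (hα : Filter.Tendsto
      (fun lam : ℝ =>
        Real.log (sSup {r : ℝ | ∃ x : EuclideanSpace ℝ (Fin n), x ≠ 0 ∧
          r = φ (lam • x) / φ x}) / Real.log lam)
      (nhdsWithin 0 (Ioi (0:ℝ))) (nhds α))
    (hμ0 : 0 < μ) (hμα : μ < α) :
    ∀ M : ℝ, ∃ R : ℝ, ∀ u : ℝ → EuclideanSpace ℝ (Fin n),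
      MemOrlicz φ T u → R < luxNorm φ T u →
        ENNReal.ofReal (M * (luxNorm φ T u) ^ μ) ≤ orliczModular φ T u := by
    -- choose ν strictly between μ and α
  set ν := (μ + α) / 2 with hνdef
  have hμν : μ < ν := by simp only [hνdef]; linarith
  have hνα : ν < α := by simp only [hνdef]; linarith
  have hν0 : 0 < ν := lt_trans hμ0 hμν
  -- positivity of φ away from 0
  have hφpos : ∀ x : EuclideanSpace ℝ (Fin n), x ≠ 0 → 0 < φ x := by
    intro x hx
    exact lt_of_le_of_ne (hN.isG.nonneg x) (fun h => hx ((hN.zero_iff x).mp h.symm))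
  -- convexity bound
  have conv : ∀ a : ℝ, 0 ≤ a → a ≤ 1 → ∀ y, φ (a • y) ≤ a * φ y := by
    intro a ha ha1 y
    have h := hN.isG.convexOn.2 (Set.mem_univ y) (Set.mem_univ (0 : EuclideanSpace ℝ (Fin n)))
      ha (by linarith : (0:ℝ) ≤ 1 - a) (by ring)
    simpa [hN.isG.zero, smul_zero] using h
  -- eventual bound from the index hypothesis
  have hev := hα.eventually_const_lt hνα
  obtain ⟨δ', hδ'pos, hδ'⟩ := (nhdsGT_basis (0:ℝ)).eventually_iff.mp hev
  set δ := min δ' 1 with hδdef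
  have hδpos : 0 < δ := lt_min hδ'pos one_pos
  have hδ1 : δ ≤ 1 := min_le_right _ _
  -- key pointwise estimate : φ(λ x) ≤ λ^ν φ(x) for small λ
  have key : ∀ lam : ℝ, 0 < lam → lam < δ → ∀ x, φ (lam • x) ≤ lam ^ ν * φ x := by
    intro lam hlam hlamδ x
    rcases eq_or_ne x 0 with rfl | hx
    · simp [hN.isG.zero]
    · have hlam1 : lam < 1 := lt_of_lt_of_le hlamδ hδ1
      have hloglam : Real.log lam < 0 := Real.log_neg hlam hlam1
      have hS := hδ' ⟨hlam, lt_of_lt_of_le hlamδ (min_le_left _ _)⟩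
      set S := sSup {r : ℝ | ∃ x : EuclideanSpace ℝ (Fin n), x ≠ 0 ∧
          r = φ (lam • x) / φ x} with hSdef
      have hlogS : Real.log S < ν * Real.log lam :=
        (lt_div_iff_of_neg hloglam).mp hS
      have hbdd : BddAbove {r : ℝ | ∃ x : EuclideanSpace ℝ (Fin n), x ≠ 0 ∧
          r = φ (lam • x) / φ x} := by
        refine ⟨lam, ?_⟩
        rintro r ⟨y, hy, rfl⟩
        rw [div_le_iff₀ (hφpos y hy)]
        exact conv lam hlam.le hlam1.le y
      have hmem : φ (lam • x) / φ x ∈ {r : ℝ | ∃ x : EuclideanSpace ℝ (Fin n), x ≠ 0 ∧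
          r = φ (lam • x) / φ x} := ⟨x, hx, rfl⟩
      have hrS : φ (lam • x) / φ x ≤ S := le_csSup hbdd hmem
      have hSlt : S < lam ^ ν := by
        rcases le_or_gt S 0 with h | h
        · exact lt_of_le_of_lt h (Real.rpow_pos_of_pos hlam ν)
        · have hlog : Real.log S < Real.log (lam ^ ν) := by
            rwa [Real.log_rpow hlam]
          exact (Real.log_lt_log_iff h (Real.rpow_pos_of_pos hlam ν)).mp hlog
      have hlt : φ (lam • x) / φ x < lam ^ ν := lt_of_le_of_lt hrS hSlt
      exact le_of_lt ((div_lt_iff₀ (hφpos x hx)).mp hlt)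
  -- choose R
  intro M
  set A := max M 1 * 2 ^ ν with hAdef
  have hA1 : (1:ℝ) ≤ A := by
    have h2 : (1:ℝ) ≤ 2 ^ ν := Real.one_le_rpow one_le_two hν0.le
    calc (1:ℝ) = 1 * 1 := by ring
    _ ≤ max M 1 * 2 ^ ν := mul_le_mul (le_max_right M 1) h2 one_pos.le
        (le_trans one_pos.le (le_max_right M 1))
  have hA0 : 0 < A := lt_of_lt_of_le one_pos hA1
  set K := A ^ (ν - μ)⁻¹ with hKdef
  have hK0 : 0 < K := Real.rpow_pos_of_pos hA0 _
  refine ⟨max (2 / δ) K, ?_⟩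
  intro u _hu hRL
  set L := luxNorm φ T u with hLdef
  have hL2δ : 2 / δ < L := lt_of_le_of_lt (le_max_left _ _) hRL
  have hKL : K < L := lt_of_le_of_lt (le_max_right _ _) hRL
  have h2δ : (2:ℝ) ≤ 2 / δ := by
    rw [le_div_iff₀ hδpos]
    nlinarith
  have hL2 : (2:ℝ) < L := lt_of_le_of_lt h2δ hL2δ
  have hL0 : (0:ℝ) < L := by linarith
  set l := L / 2 with hldef
  have hl0 : 0 < l := by positivity
  have hlL : l < L := by simp only [hldef]; linarith
  have hlam0 : 0 < l⁻¹ := inv_pos.mpr hl0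
  have hlamδ : l⁻¹ < δ := by
    have h1 : (2:ℝ) < L * δ := (div_lt_iff₀ hδpos).mp hL2δ
    have h2 : l⁻¹ = 2 / L := by rw [hldef]; field_simp
    rw [h2, div_lt_iff₀ hL0]
    nlinarith
  -- l is below the Luxemburg norm, so the modular at l⁻¹ • u exceeds 1
  have hlnot : l ∉ {l' : ℝ | 0 < l' ∧ orliczModular φ T (fun t => l'⁻¹ • u t) ≤ 1} := by
    intro hmem
    have hbdd : BddBelow {l' : ℝ | 0 < l' ∧ orliczModular φ T (fun t => l'⁻¹ • u t) ≤ 1} :=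
      ⟨0, fun y hy => hy.1.le⟩
    have : L ≤ l := csInf_le hbdd hmem
    linarith
  have hmod : 1 < orliczModular φ T (fun t => l⁻¹ • u t) := by
    by_contra h
    exact hlnot ⟨hl0, le_of_not_gt h⟩
  -- compare modulars
  have hcompare : orliczModular φ T (fun t => l⁻¹ • u t) ≤
      ENNReal.ofReal (l⁻¹ ^ ν) * orliczModular φ T u := by
    rw [orliczModular, orliczModular, ← MeasureTheory.lintegral_const_mul' _ _ ENNReal.ofReal_ne_top]
    refine MeasureTheory.lintegral_mono fun t => ?_
    rw [← ENNReal.ofReal_mul (by positivity)]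
    exact ENNReal.ofReal_le_ofReal (key l⁻¹ hlam0 hlamδ (u t))
  -- deduce the lower bound ρ(u) ≥ l^ν
  have hcval : ENNReal.ofReal (l⁻¹ ^ ν) = (ENNReal.ofReal (l ^ ν))⁻¹ := by
    rw [Real.inv_rpow hl0.le, ENNReal.ofReal_inv_of_pos (Real.rpow_pos_of_pos hl0 ν)]
  have hlower : ENNReal.ofReal (l ^ ν) ≤ orliczModular φ T u := by
    have h1 : (1:ℝ≥0∞) < (ENNReal.ofReal (l ^ ν))⁻¹ * orliczModular φ T u := by
      rw [← hcval]; exact lt_of_lt_of_le hmod hcompare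
    have hne0 : ENNReal.ofReal (l ^ ν) ≠ 0 := by
      simp [ENNReal.ofReal_eq_zero, not_le, Real.rpow_pos_of_pos hl0 ν]
    calc ENNReal.ofReal (l ^ ν) = ENNReal.ofReal (l ^ ν) * 1 := (mul_one _).symm
    _ ≤ ENNReal.ofReal (l ^ ν) * ((ENNReal.ofReal (l ^ ν))⁻¹ * orliczModular φ T u) :=
        mul_le_mul_right h1.le _
    _ = (ENNReal.ofReal (l ^ ν) * (ENNReal.ofReal (l ^ ν))⁻¹) * orliczModular φ T u :=
        (mul_assoc _ _ _).symm
    _ = orliczModular φ T u := by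
        rw [ENNReal.mul_inv_cancel hne0 ENNReal.ofReal_ne_top, one_mul]
  -- the real-number inequality M * L^μ ≤ (L/2)^ν
  refine le_trans (ENNReal.ofReal_le_ofReal ?_) hlower
  have hKν : K ^ (ν - μ) = A := by
    rw [hKdef, ← Real.rpow_mul hA0.le, inv_mul_cancel₀ (by linarith : ν - μ ≠ 0), Real.rpow_one]
  have hLK : A ≤ L ^ (ν - μ) := by
    rw [← hKν]
    exact Real.rpow_le_rpow hK0.le hKL.le (by linarith)
  have h2ν : (0:ℝ) < 2 ^ ν := Real.rpow_pos_of_pos two_pos ν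
  have hLμ : (0:ℝ) < L ^ μ := Real.rpow_pos_of_pos hL0 μ
  have hstep : max M 1 * 2 ^ ν * L ^ μ ≤ L ^ (ν - μ) * L ^ μ :=
    mul_le_mul_of_nonneg_right hLK hLμ.le
  have hLsplit : L ^ (ν - μ) * L ^ μ = L ^ ν := by
    rw [← Real.rpow_add hL0]; ring_nf
  have hfinal : M * L ^ μ * 2 ^ ν ≤ L ^ ν := by
    calc M * L ^ μ * 2 ^ ν ≤ max M 1 * L ^ μ * 2 ^ ν :=
          mul_le_mul_of_nonneg_right (mul_le_mul_of_nonneg_right (le_max_left M 1) hLμ.le) h2ν.le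
    _ = max M 1 * 2 ^ ν * L ^ μ := by ring
    _ ≤ L ^ (ν - μ) * L ^ μ := hstep
    _ = L ^ ν := hLsplit
  have hdiv : (l:ℝ) ^ ν = L ^ ν / 2 ^ ν := by
    rw [hldef, Real.div_rpow hL0.le two_pos.le]
  rw [hdiv, le_div_iff₀ h2ν]
  exact hfinal
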